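/- arXiv:2605.14643 — 2 statements merged into one kernel-verified Lean document; each statement's English description precedes it below -/
import Mathlib

section
/- Let λ₁, ..., λ_d be real numbers and define T_k = Σᵢ λᵢᵏ. For every integer M ≥ 1 and every real y, the quantity Q₁(y) := 2(1 − 1/M) y² T₂ + 4(1 − 1/M²) y T₃ + 3(1 − 1/M³) T₄ + (1/2)(1 − 1/M²) T₂² is nonnegative. -/
theorem Q1_nonneg (d : ℕ) (lam : Fin d → ℝ) (M : ℕ) (hM : 1 ≤ M) (y : ℝ) :
    0 ≤ 2 * (1 - 1 / (M : ℝ)) * y ^ 2 * (∑ i, lam i ^ 2)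
      + 4 * (1 - 1 / (M : ℝ) ^ 2) * y * (∑ i, lam i ^ 3)
      + 3 * (1 - 1 / (M : ℝ) ^ 3) * (∑ i, lam i ^ 4)
      + (1 / 2) * (1 - 1 / (M : ℝ) ^ 2) * (∑ i, lam i ^ 2) ^ 2 := by
  have hMpos : (0:ℝ) < (M:ℝ) := by exact_mod_cast Nat.lt_of_lt_of_le Nat.zero_lt_one hM
  have hm1 : 1 / (M:ℝ) ≤ 1 := by
    rw [div_le_one hMpos]; exact_mod_cast hM
  have hm0 : 0 < 1 / (M:ℝ) := by positivity
  set m := 1 / (M:ℝ) with hm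
  have hm2 : 1 / (M:ℝ)^2 = m^2 := by rw [hm]; ring
  have hm3 : 1 / (M:ℝ)^3 = m^3 := by rw [hm]; ring
  rw [hm2, hm3]
  have h42 : (∑ i, lam i ^ 4) ≤ (∑ i, lam i ^ 2) ^ 2 := by
    have h := Finset.sum_sq_le_sq_sum_of_nonneg (s := Finset.univ)
      (f := fun i => lam i ^ 2) (fun i _ => sq_nonneg _)
    calc (∑ i, lam i ^ 4) = ∑ i, (lam i ^ 2) ^ 2 := by
          apply Finset.sum_congr rfl; intro i _; ring
      _ ≤ (∑ i, lam i ^ 2) ^ 2 := h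
  have key : ∀ i : Fin d, 0 ≤ 2*(1-m)*y^2*lam i^2 + 4*(1-m^2)*y*lam i^3
      + (3*(1-m^3)+(1-m^2)/2)*lam i^4 := by
    intro i
    nlinarith [mul_nonneg (sub_nonneg.2 hm1) (sq_nonneg (y*lam i + (1+m)*lam i^2)),
      mul_nonneg (sub_nonneg.2 hm1) (sq_nonneg (lam i ^ 2)),
      mul_nonneg (mul_nonneg (sub_nonneg.2 hm1) (sq_nonneg (lam i^2))) hm0.le,
      mul_nonneg (mul_nonneg (sub_nonneg.2 hm1) (sq_nonneg (lam i^2))) (mul_nonneg hm0.le hm0.le)]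
  have hsum : 0 ≤ ∑ i, (2*(1-m)*y^2*lam i^2 + 4*(1-m^2)*y*lam i^3
      + (3*(1-m^3)+(1-m^2)/2)*lam i^4) := Finset.sum_nonneg fun i _ => key i
  have expand : ∑ i, (2*(1-m)*y^2*lam i^2 + 4*(1-m^2)*y*lam i^3
      + (3*(1-m^3)+(1-m^2)/2)*lam i^4)
      = 2*(1-m)*y^2*(∑ i, lam i ^ 2) + 4*(1-m^2)*y*(∑ i, lam i ^ 3)
        + (3*(1-m^3)+(1-m^2)/2)*(∑ i, lam i ^ 4) := by
    rw [Finset.mul_sum, Finset.mul_sum, Finset.mul_sum, ← Finset.sum_add_distrib,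
      ← Finset.sum_add_distrib]
  rw [expand] at hsum
  have hb : 0 ≤ 1 - m^2 := by nlinarith
  nlinarith [mul_nonneg hb (sub_nonneg.2 h42)]
end

section
/- Let λ₁, ..., λ_d be real numbers and T_k = Σᵢ λᵢᵏ. Let M, M₁, M₂ be positive integers, α = 2/M − 1/(2M₁) − 1/(2M₂), β = 1/(2M²) − 1/(4M₁M₂). Assume β > 0 and α ≥ 4/(3M + βM⁴). Then for every real y, Q₂(y) := α y² T₂ + (4/M²) y T₃ + (3/M³) T₄ + β T₂² ≥ 0. -/
/-!
Write `b = 4 / M²` and `c = 3 / M³ + β`. For each `λ = λᵢ` the summand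
`α y² λ² + b y λ³ + c λ⁴` is a binary quadratic form in `(y λ, λ²)`, and the hypothesis on `α`
is exactly the discriminant condition `b² ≤ 4 α c`, so every summand is nonnegative. Summing gives
`Q₂(y) ≥ β (T₂² - T₄)`, which is nonnegative because `T₄ ≤ T₂²`.
-/

open Finset

lemma binary_quadratic_form_nonneg {a b c : ℝ} (ha : 0 ≤ a) (hc : 0 ≤ c)
    (hdisc : b ^ 2 ≤ 4 * a * c) (u v : ℝ) : 0 ≤ a * u ^ 2 + b * u * v + c * v ^ 2 := by
  rcases ha.eq_or_lt with rfl | ha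
  · have hb : b = 0 := by nlinarith [sq_nonneg b]
    subst hb
    simpa using mul_nonneg hc (sq_nonneg v)
  · have hsq : 4 * a * (a * u ^ 2 + b * u * v + c * v ^ 2)
        = (2 * a * u + b * v) ^ 2 + (4 * a * c - b ^ 2) * v ^ 2 := by ring
    have : 0 ≤ 4 * a * (a * u ^ 2 + b * u * v + c * v ^ 2) := by
      rw [hsq]
      have : 0 ≤ 4 * a * c - b ^ 2 := by linarith
      positivity
    exact (mul_nonneg_iff_of_pos_left (by positivity)).mp this

lemma sum_pow_four_le_sq_sum_sq {ι : Type*} (s : Finset ι) (x : ι → ℝ) :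
    ∑ i ∈ s, x i ^ 4 ≤ (∑ i ∈ s, x i ^ 2) ^ 2 := by
  simpa only [← pow_mul] using sum_sq_le_sq_sum_of_nonneg (s := s) (f := fun i ↦ x i ^ 2)
    fun i _ ↦ sq_nonneg (x i)

lemma sq_four_div_sq_le_mul_of_four_div_le {m α β : ℝ} (hm : 0 ≤ m) (hβ : 0 ≤ β)
    (hα : 4 / (3 * m + β * m ^ 4) ≤ α) : (4 / m ^ 2) ^ 2 ≤ 4 * α * (3 / m ^ 3 + β) := by
  have hα₀ : 0 ≤ α := le_trans (by positivity) hα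
  rcases hm.eq_or_lt with rfl | hm
  · simp only [ne_eq, OfNat.ofNat_ne_zero, not_false_eq_true, zero_pow, div_zero]
    positivity
  · have hD : 0 < 3 * m + β * m ^ 4 := by positivity
    have hαD : 4 ≤ α * (3 * m + β * m ^ 4) := (div_le_iff₀ hD).mp hα
    have hcoef : 3 / m ^ 3 + β = (3 * m + β * m ^ 4) / m ^ 4 := by field_simp
    rw [hcoef, div_pow, ← pow_mul, mul_div_assoc', div_le_div_iff_of_pos_right (by positivity)]
    linarith

theorem Q2_nonneg_general (d : ℕ) (lam : Fin d → ℝ) (M : ℕ) (α β : ℝ) (hβpos : 0 < β)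
    (hαge : α ≥ 4 / (3 * (M : ℝ) + β * (M : ℝ) ^ 4)) (y : ℝ) :
    0 ≤ α * y ^ 2 * (∑ i, lam i ^ 2)
      + (4 / (M : ℝ) ^ 2) * y * (∑ i, lam i ^ 3)
      + (3 / (M : ℝ) ^ 3) * (∑ i, lam i ^ 4)
      + β * (∑ i, lam i ^ 2) ^ 2 := by
  have hα : 0 ≤ α := le_trans (by positivity) hαge
  have hdisc := sq_four_div_sq_le_mul_of_four_div_le (Nat.cast_nonneg M) hβpos.le hαge
  set b : ℝ := 4 / (M : ℝ) ^ 2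
  set c : ℝ := 3 / (M : ℝ) ^ 3 + β
  have hsummand (i : Fin d) : 0 ≤ α * (y * lam i) ^ 2 + b * (y * lam i) * lam i ^ 2
      + c * (lam i ^ 2) ^ 2 :=
    binary_quadratic_form_nonneg hα (by positivity) hdisc _ _
  have hsum : ∑ i, (α * (y * lam i) ^ 2 + b * (y * lam i) * lam i ^ 2 + c * (lam i ^ 2) ^ 2)
      = α * y ^ 2 * (∑ i, lam i ^ 2) + b * y * (∑ i, lam i ^ 3) + c * (∑ i, lam i ^ 4) := by
    simp only [mul_sum, ← sum_add_distrib]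
    exact sum_congr rfl fun i _ ↦ by ring
  calc 0 ≤ ∑ i, (α * (y * lam i) ^ 2 + b * (y * lam i) * lam i ^ 2 + c * (lam i ^ 2) ^ 2)
        + β * ((∑ i, lam i ^ 2) ^ 2 - ∑ i, lam i ^ 4) :=
        add_nonneg (sum_nonneg fun i _ ↦ hsummand i)
          (mul_nonneg hβpos.le (sub_nonneg.mpr (sum_pow_four_le_sq_sum_sq _ _)))
    _ = _ := by rw [hsum]; ring

theorem Q2_nonneg (d : ℕ) (lam : Fin d → ℝ) (M M₁ M₂ : ℕ)
    (hM : 1 ≤ M) (hM₁ : 1 ≤ M₁) (hM₂ : 1 ≤ M₂) (α β : ℝ)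
    (hα : α = 2 / (M : ℝ) - 1 / (2 * (M₁ : ℝ)) - 1 / (2 * (M₂ : ℝ)))
    (hβ : β = 1 / (2 * (M : ℝ) ^ 2) - 1 / (4 * (M₁ : ℝ) * (M₂ : ℝ)))
    (hβpos : 0 < β)
    (hαge : α ≥ 4 / (3 * (M : ℝ) + β * (M : ℝ) ^ 4)) (y : ℝ) :
    0 ≤ α * y ^ 2 * (∑ i, lam i ^ 2)
      + (4 / (M : ℝ) ^ 2) * y * (∑ i, lam i ^ 3)
      + (3 / (M : ℝ) ^ 3) * (∑ i, lam i ^ 4)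
      + β * (∑ i, lam i ^ 2) ^ 2 :=
  Q2_nonneg_general d lam M α β hβpos hαge y
end
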